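/- The number of monic polynomials of degree n in ℤ[x] with all roots in the closed unit disc equals the number of sequences (x_0, x_1, x_2, …) of nonnegative integers, almost all zero, satisfying Σ_{r ≥ 0} x_r φ(r) = n, where φ(0) = φ(1) = 1 by convention. -/

import Mathlib

open Polynomial

noncomputable def kfac (r : ℕ) : Polynomial ℤ := if r = 0 then X else cyclotomic r ℤ

noncomputable def kprod (x : ℕ →₀ ℕ) : Polynomial ℤ := x.prod fun r c => kfac r ^ c

lemma kfac_monic (r : ℕ) : (kfac r).Monic := by
  unfold kfac; split
  · exact monic_X
  · exact cyclotomic.monic r ℤ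

lemma kfac_natDegree (r : ℕ) :
    (kfac r).natDegree = if r ≤ 1 then 1 else Nat.totient r := by
  unfold kfac
  rcases r with _ | _ | r
  · simp
  · norm_num [cyclotomic_one]
    rw [← C_1, natDegree_X_sub_C]
  · simp [natDegree_cyclotomic]

lemma kprod_monic (x : ℕ →₀ ℕ) : (kprod x).Monic :=
  monic_prod_of_monic _ _ fun r _ => (kfac_monic r).pow _

lemma kprod_natDegree (x : ℕ →₀ ℕ) :
    (kprod x).natDegree = x.sum fun r c => c * (if r ≤ 1 then 1 else Nat.totient r) := by
  unfold kprod Finsupp.prod Finsupp.sum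
  rw [natDegree_prod _ _ fun r _ => ((kfac_monic r).pow _).ne_zero]
  exact Finset.sum_congr rfl fun r _ => by rw [natDegree_pow, kfac_natDegree]

lemma kprod_aroots (x : ℕ →₀ ℕ) : ∀ z ∈ (kprod x).aroots ℂ, ‖z‖ ≤ 1 := by
  intro z hz
  rw [aroots_def, mem_roots'] at hz
  obtain ⟨-, hroot⟩ := hz
  unfold kprod Finsupp.prod at hroot
  rw [Polynomial.map_prod, IsRoot.def, eval_prod, Finset.prod_eq_zero_iff] at hroot
  obtain ⟨r, hrs, hr0⟩ := hroot
  rw [Polynomial.map_pow, eval_pow,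
    pow_eq_zero_iff (Finsupp.mem_support_iff.mp hrs)] at hr0
  rcases eq_or_ne r 0 with rfl | hr
  · rw [show kfac 0 = X from if_pos rfl, map_X, eval_X] at hr0
    rw [hr0]
    simp
  · haveI : NeZero ((r : ℂ)) := ⟨Nat.cast_ne_zero.mpr hr⟩
    rw [show kfac r = cyclotomic r ℤ from if_neg hr, map_cyclotomic] at hr0
    have hprim : IsPrimitiveRoot z r := isRoot_cyclotomic_iff.mp hr0
    have habs : ‖z‖ ^ r = 1 := by
      rw [← norm_pow, hprim.pow_eq_one, norm_one]
    have : ‖z‖ = 1 :=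
      (pow_left_strictMonoOn₀ hr).injOn (Set.mem_setOf_eq ▸ norm_nonneg z)
        (Set.mem_setOf_eq ▸ zero_le_one) (by rw [habs, one_pow])
    exact le_of_eq this

noncomputable def kzeta (r : ℕ) : ℂ :=
  if r = 0 then 0 else Complex.exp (2 * Real.pi * Complex.I / r)

lemma kzeta_prim {r : ℕ} (hr : r ≠ 0) : IsPrimitiveRoot (kzeta r) r := by
  rw [kzeta, if_neg hr]
  exact Complex.isPrimitiveRoot_exp r hr

lemma rootMultiplicity_one' (a : ℂ) : rootMultiplicity a (1 : Polynomial ℂ) = 0 :=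
  rootMultiplicity_eq_zero (by simp [IsRoot])

lemma rootMultiplicity_finset_prod {ι : Type*} (s : Finset ι) (f : ι → Polynomial ℂ)
    (h : ∀ i ∈ s, f i ≠ 0) (a : ℂ) :
    rootMultiplicity a (∏ i ∈ s, f i) = ∑ i ∈ s, rootMultiplicity a (f i) := by
  classical
  induction s using Finset.induction_on with
  | empty => simpa using rootMultiplicity_one' a
  | @insert i s hi ih =>
      rw [Finset.prod_insert hi, Finset.sum_insert hi,
        rootMultiplicity_mul (mul_ne_zero (h i (Finset.mem_insert_self i s))
          (Finset.prod_ne_zero_iff.mpr fun j hj => h j (Finset.mem_insert_of_mem hj))),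
        ih fun j hj => h j (Finset.mem_insert_of_mem hj)]

lemma rootMultiplicity_pow' (a : ℂ) {p : Polynomial ℂ} (hp : p ≠ 0) (c : ℕ) :
    rootMultiplicity a (p ^ c) = c * rootMultiplicity a p := by
  induction c with
  | zero => simpa using rootMultiplicity_one' a
  | succ c ih =>
      rw [pow_succ, rootMultiplicity_mul (mul_ne_zero (pow_ne_zero _ hp) hp), ih]
      ring

lemma kM (r s : ℕ) :
    rootMultiplicity (kzeta r) ((kfac s).map (algebraMap ℤ ℂ)) = if s = r then 1 else 0 := by
  classical
  rcases eq_or_ne r 0 with rfl | hr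
  · rcases eq_or_ne s 0 with rfl | hs
    · rw [if_pos rfl, show kfac 0 = X from if_pos rfl, map_X, kzeta, if_pos rfl,
        show (X : Polynomial ℂ) = X - C 0 by simp]
      exact rootMultiplicity_X_sub_C_self
    · rw [if_neg hs, show kfac s = cyclotomic s ℤ from if_neg hs, map_cyclotomic]
      haveI : NeZero ((s : ℂ)) := ⟨Nat.cast_ne_zero.mpr hs⟩
      refine rootMultiplicity_eq_zero fun hroot => ?_
      have hprim : IsPrimitiveRoot (kzeta 0) s := isRoot_cyclotomic_iff.mp hroot
      have := hprim.pow_eq_one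
      rw [kzeta, if_pos rfl, zero_pow hs] at this
      exact zero_ne_one this
  · rcases eq_or_ne s 0 with rfl | hs
    · rw [if_neg (Ne.symm hr), show kfac 0 = X from if_pos rfl, map_X]
      refine rootMultiplicity_eq_zero fun hroot => ?_
      have : kzeta r = 0 := by simpa [IsRoot] using hroot
      rw [kzeta, if_neg hr] at this
      exact Complex.exp_ne_zero _ this
    · haveI : NeZero ((s : ℂ)) := ⟨Nat.cast_ne_zero.mpr hs⟩
      rw [show kfac s = cyclotomic s ℤ from if_neg hs, map_cyclotomic,
        ← count_roots]
      rcases eq_or_ne s r with rfl | hsr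
      · rw [if_pos rfl]
        refine Multiset.count_eq_one_of_mem (roots_cyclotomic_nodup) ?_
        rw [mem_roots (cyclotomic_ne_zero s ℂ), isRoot_cyclotomic_iff]
        exact kzeta_prim hs
      · rw [if_neg hsr, Multiset.count_eq_zero]
        intro hmem
        rw [mem_roots (cyclotomic_ne_zero s ℂ), isRoot_cyclotomic_iff] at hmem
        exact hsr (hmem.unique (kzeta_prim hr))

lemma rootMultiplicity_kprod (x : ℕ →₀ ℕ) (r : ℕ) :
    rootMultiplicity (kzeta r) ((kprod x).map (algebraMap ℤ ℂ)) = x r := by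
  classical
  unfold kprod Finsupp.prod
  rw [Polynomial.map_prod]
  simp_rw [Polynomial.map_pow]
  rw [rootMultiplicity_finset_prod _ _
    (fun i _ => pow_ne_zero _ ((kfac_monic i).map (algebraMap ℤ ℂ)).ne_zero)]
  have : ∀ i ∈ x.support, rootMultiplicity (kzeta r) ((kfac i).map (algebraMap ℤ ℂ) ^ x i)
      = if i = r then x i else 0 := by
    intro i _
    rw [rootMultiplicity_pow' _ ((kfac_monic i).map (algebraMap ℤ ℂ)).ne_zero, kM]
    split <;> simp
  rw [Finset.sum_congr rfl this, Finset.sum_ite_eq' x.support r (fun i => x i)]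
  split
  · rfl
  · exact (Finsupp.notMem_support_iff.mp (by assumption)).symm

lemma kprod_injective : Function.Injective kprod := by
  intro x y h
  ext r
  rw [← rootMultiplicity_kprod x r, ← rootMultiplicity_kprod y r, h]

lemma multiset_prod_le_one {s : Multiset ℝ} (h : ∀ x ∈ s, 0 ≤ x ∧ x ≤ 1) : s.prod ≤ 1 := by
  induction s using Multiset.induction_on with
  | empty => simp
  | cons a s ih =>
      rw [Multiset.prod_cons]
      have ha := h a (Multiset.mem_cons_self a s)
      have hs : s.prod ≤ 1 := ih fun x hx => h x (Multiset.mem_cons_of_mem hx)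
      have hs0 : 0 ≤ s.prod := Multiset.prod_nonneg fun x hx => (h x (Multiset.mem_cons_of_mem hx)).1
      calc a * s.prod ≤ 1 * 1 := mul_le_mul ha.2 hs hs0 zero_le_one
      _ = 1 := mul_one 1

set_option maxHeartbeats 1000000 in
open IntermediateField in
lemma kronecker_core {f : Polynomial ℤ} (hm : f.Monic)
    (hr : ∀ z ∈ f.aroots ℂ, ‖z‖ ≤ 1) {z : ℂ} (hz : aeval z f = 0) (hz0 : z ≠ 0) :
    ∃ m, 0 < m ∧ z ^ m = 1 := by
  classical
  have hzi : IsIntegral ℤ z := ⟨f, hm, hz⟩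
  have hzQ : IsIntegral ℚ z := hzi.tower_top
  set p := minpoly ℚ z with hp
  have hpm : p.Monic := minpoly.monic hzQ
  have hpdvd : p ∣ f.map (algebraMap ℤ ℚ) :=
    minpoly.dvd ℚ z (by rw [aeval_map_algebraMap]; exact hz)
  have hmapdvd : p.map (algebraMap ℚ ℂ) ∣ f.map (algebraMap ℤ ℂ) := by
    have := Polynomial.map_dvd (algebraMap ℚ ℂ) hpdvd
    rwa [Polynomial.map_map, ← IsScalarTower.algebraMap_eq] at this
  have hroots_le : ∀ w ∈ (p.map (algebraMap ℚ ℂ)).roots, ‖w‖ ≤ 1 := by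
    intro w hw
    obtain ⟨-, hwroot⟩ := mem_roots'.mp hw
    apply hr
    rw [aroots_def]
    exact mem_roots'.mpr ⟨(hm.map (algebraMap ℤ ℂ)).ne_zero, hwroot.dvd hmapdvd⟩
  have hconst : 1 ≤ ‖(p.map (algebraMap ℚ ℂ)).coeff 0‖ := by
    have h1 : p = (minpoly ℤ z).map (algebraMap ℤ ℚ) :=
      minpoly.isIntegrallyClosed_eq_field_fractions' ℚ hzi
    have h2 : p.coeff 0 ≠ 0 := minpoly.coeff_zero_ne_zero hzQ hz0
    have h3 : p.coeff 0 = ((minpoly ℤ z).coeff 0 : ℚ) := by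
      rw [h1, coeff_map, eq_intCast]
    have h4 : (minpoly ℤ z).coeff 0 ≠ 0 := by
      intro h
      exact h2 (by rw [h3, h, Int.cast_zero])
    rw [coeff_map, h3]
    have h5 : (algebraMap ℚ ℂ) (((minpoly ℤ z).coeff 0 : ℚ)) = (((minpoly ℤ z).coeff 0 : ℤ) : ℂ) := by
      push_cast
      simp
    rw [h5, Complex.norm_intCast]
    exact_mod_cast Int.one_le_abs h4
  have habs1 : ∀ w ∈ (p.map (algebraMap ℚ ℂ)).roots, ‖w‖ = 1 := by
    intro w hw
    have hsplit : Splits (p.map (algebraMap ℚ ℂ)) :=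
      IsAlgClosed.splits _
    have hcoeff := hsplit.coeff_zero_eq_prod_roots_of_monic
      (hpm.map (algebraMap ℚ ℂ))
    have hprodabs : (1 : ℝ) ≤ (((p.map (algebraMap ℚ ℂ)).roots).map (fun u : ℂ => ‖u‖)).prod := by
      have heq : ‖(p.map (algebraMap ℚ ℂ)).coeff 0‖
          = (((p.map (algebraMap ℚ ℂ)).roots).map (fun u : ℂ => ‖u‖)).prod := by
        rw [hcoeff, norm_mul, norm_pow, norm_neg, norm_one, one_pow, one_mul]
        exact map_multiset_prod (normHom : ℂ →*₀ ℝ) _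
      linarith [heq ▸ hconst]
    have herase : (((p.map (algebraMap ℚ ℂ)).roots.erase w).map (fun u : ℂ => ‖u‖)).prod ≤ 1 :=
      multiset_prod_le_one fun x hx => by
        obtain ⟨u, hu, rfl⟩ := Multiset.mem_map.mp hx
        exact ⟨norm_nonneg u, hroots_le u (Multiset.mem_of_mem_erase hu)⟩
    have hsplitprod : ‖w‖ * (((p.map (algebraMap ℚ ℂ)).roots.erase w).map (fun u : ℂ => ‖u‖)).prod
        = (((p.map (algebraMap ℚ ℂ)).roots).map (fun u : ℂ => ‖u‖)).prod := Multiset.prod_map_erase hw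
    refine le_antisymm (hroots_le w hw) ?_
    nlinarith [norm_nonneg w]
  -- now pass to the number field ℚ⟮z⟯
  haveI : FiniteDimensional ℚ ℚ⟮z⟯ := adjoin.finiteDimensional hzQ
  haveI : NumberField ℚ⟮z⟯ := ⟨⟩
  set x₀ : ℚ⟮z⟯ := AdjoinSimple.gen ℚ z with hx₀def
  have hx₀ : algebraMap ℚ⟮z⟯ ℂ x₀ = z := AdjoinSimple.algebraMap_gen ℚ z
  have hinj : Function.Injective (algebraMap ℚ⟮z⟯ ℂ) := (algebraMap ℚ⟮z⟯ ℂ).injective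
  have hx₀i : IsIntegral ℤ x₀ := by
    rw [← isIntegral_algebraMap_iff hinj, hx₀]
    exact hzi
  have hminp : minpoly ℚ x₀ = p := by
    rw [hp]
    conv_rhs => rw [← hx₀]
    exact (minpoly.algebraMap_eq hinj x₀).symm
  have hnorm : ∀ φ : ℚ⟮z⟯ →+* ℂ, ‖φ x₀‖ = 1 := by
    intro φ
    have h2 : aeval (φ x₀) p = 0 := by
      have h3 := Polynomial.aeval_algHom_apply φ.toRatAlgHom x₀ (minpoly ℚ x₀)
      rw [minpoly.aeval, map_zero, hminp] at h3
      exact h3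
    have hmem : φ x₀ ∈ (p.map (algebraMap ℚ ℂ)).roots := by
      refine mem_roots'.mpr ⟨(hpm.map (algebraMap ℚ ℂ)).ne_zero, ?_⟩
      rw [IsRoot.def, eval_map, ← aeval_def]
      exact h2
    exact habs1 _ hmem
  obtain ⟨m, hm0, hpow⟩ := NumberField.Embeddings.pow_eq_one_of_norm_eq_one ℚ⟮z⟯ ℂ hx₀i hnorm
  exact ⟨m, hm0, by rw [← hx₀, ← map_pow, hpow, map_one]⟩

lemma kprod_add (x y : ℕ →₀ ℕ) : kprod (x + y) = kprod x * kprod y := by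
  unfold kprod
  exact Finsupp.prod_add_index' (fun r => pow_zero _) (fun r a b => pow_add _ a b)

lemma kprod_single (r : ℕ) : kprod (Finsupp.single r 1) = kfac r := by
  unfold kprod
  exact (Finsupp.prod_single_index (h := fun s c => kfac s ^ c) (pow_zero (kfac r))).trans
    (pow_one _)

lemma aroots_le_of_dvd {g f : Polynomial ℤ} (hdvd : g ∣ f) (hf : f.Monic)
    (hroots : ∀ z ∈ f.aroots ℂ, ‖z‖ ≤ 1) :
    ∀ z ∈ g.aroots ℂ, ‖z‖ ≤ 1 := by
  intro w hw
  apply hroots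
  rw [aroots_def, mem_roots'] at hw ⊢
  exact ⟨(hf.map (algebraMap ℤ ℂ)).ne_zero,
    hw.2.dvd (Polynomial.map_dvd (algebraMap ℤ ℂ) hdvd)⟩

lemma exists_kprod (N : ℕ) : ∀ f : Polynomial ℤ, f.natDegree ≤ N → f.Monic →
    (∀ z ∈ f.aroots ℂ, ‖z‖ ≤ 1) → ∃ x, kprod x = f := by
  induction N with
  | zero =>
      intro f hdeg hm _
      refine ⟨0, ?_⟩
      rw [hm.natDegree_eq_zero.mp (Nat.le_zero.mp hdeg)]
      unfold kprod
      exact Finsupp.prod_zero_index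
  | succ N ih =>
      intro f hdeg hm hroots
      rcases Nat.eq_zero_or_pos f.natDegree with h0 | hpos
      · refine ⟨0, ?_⟩
        rw [hm.natDegree_eq_zero.mp h0]
        unfold kprod
        exact Finsupp.prod_zero_index
      have hdegmap : 0 < (f.map (algebraMap ℤ ℂ)).degree := by
        refine natDegree_pos_iff_degree_pos.mp ?_
        rw [hm.natDegree_map (algebraMap ℤ ℂ)]
        exact hpos
      obtain ⟨z, hzroot⟩ := Complex.exists_root hdegmap
      have hzaeval : aeval z f = 0 := by
        rwa [aeval_def, ← eval_map]
      by_cases hz0 : z = 0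
      · have hc0 : (algebraMap ℤ ℂ) (f.coeff 0) = 0 := by
          rw [← coeff_map, coeff_zero_eq_eval_zero]
          subst hz0; exact hzroot
        have hc : f.coeff 0 = 0 := by
          have := hc0
          rw [algebraMap_int_eq, eq_intCast] at this
          exact_mod_cast this
        obtain ⟨g, hg⟩ := X_dvd_iff.mpr hc
        have hgm : g.Monic := monic_X.of_mul_monic_left (hg ▸ hm)
        have hgdeg : g.natDegree ≤ N := by
          have : f.natDegree = 1 + g.natDegree := by
            rw [hg, natDegree_mul X_ne_zero hgm.ne_zero, natDegree_X]
          omega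
        obtain ⟨x, hx⟩ := ih g hgdeg hgm
          (aroots_le_of_dvd ⟨X, by rw [hg]; ring⟩ hm hroots)
        refine ⟨x + Finsupp.single 0 1, ?_⟩
        rw [kprod_add, hx, kprod_single, show kfac 0 = X from if_pos rfl, hg]
        ring
      · obtain ⟨m, hm0, hpow⟩ := kronecker_core hm hroots hzaeval hz0
        have hfin : IsOfFinOrder z := isOfFinOrder_iff_pow_eq_one.mpr ⟨m, hm0, hpow⟩
        have hrpos : 0 < orderOf z := hfin.orderOf_pos
        have hprim : IsPrimitiveRoot z (orderOf z) := IsPrimitiveRoot.orderOf z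
        have hcyc : cyclotomic (orderOf z) ℚ = minpoly ℚ z :=
          cyclotomic_eq_minpoly_rat hprim hrpos
        have hdvdQ : minpoly ℚ z ∣ f.map (algebraMap ℤ ℚ) :=
          minpoly.dvd ℚ z (by rw [aeval_map_algebraMap]; exact hzaeval)
        have hdvd : cyclotomic (orderOf z) ℤ ∣ f := by
          refine (map_dvd_map (algebraMap ℤ ℚ) (algebraMap ℤ ℚ).injective_int
            (cyclotomic.monic _ ℤ)).mp ?_
          rw [map_cyclotomic, hcyc]
          exact hdvdQ
        obtain ⟨g, hg⟩ := hdvd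
        have hgm : g.Monic := (cyclotomic.monic (orderOf z) ℤ).of_mul_monic_left (hg ▸ hm)
        have hgdeg : g.natDegree ≤ N := by
          have h1 : f.natDegree = (orderOf z).totient + g.natDegree := by
            rw [hg, natDegree_mul (cyclotomic_ne_zero _ ℤ) hgm.ne_zero, natDegree_cyclotomic]
          have h2 : 0 < (orderOf z).totient := Nat.totient_pos.mpr hrpos
          omega
        obtain ⟨x, hx⟩ := ih g hgdeg hgm
          (aroots_le_of_dvd ⟨cyclotomic (orderOf z) ℤ, by rw [hg]; ring⟩ hm hroots)
        refine ⟨x + Finsupp.single (orderOf z) 1, ?_⟩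
        rw [kprod_add, hx, kprod_single,
          show kfac (orderOf z) = cyclotomic (orderOf z) ℤ from if_neg hrpos.ne',
          hg]
        ring

theorem kronecker_count_eq_totient_solutions (n : ℕ) :
    {f : Polynomial ℤ | f.Monic ∧ f.natDegree = n ∧
      ∀ z ∈ f.aroots ℂ, ‖z‖ ≤ 1}.ncard =
    {x : ℕ →₀ ℕ |
      (x.sum fun r c => c * (if r ≤ 1 then 1 else Nat.totient r)) = n}.ncard := by
  have hset : {f : Polynomial ℤ | f.Monic ∧ f.natDegree = n ∧
      ∀ z ∈ f.aroots ℂ, ‖z‖ ≤ 1} =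
      kprod '' {x : ℕ →₀ ℕ |
      (x.sum fun r c => c * (if r ≤ 1 then 1 else Nat.totient r)) = n} := by
    ext f
    constructor
    · rintro ⟨hm, hdeg, hroots⟩
      obtain ⟨x, hx⟩ := exists_kprod f.natDegree f le_rfl hm hroots
      exact ⟨x, by rw [Set.mem_setOf_eq, ← kprod_natDegree, hx, hdeg], hx⟩
    · rintro ⟨x, hx, rfl⟩
      exact ⟨kprod_monic x, by rw [kprod_natDegree]; exact hx, kprod_aroots x⟩
  rw [hset, Set.ncard_image_of_injective _ kprod_injective]
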